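/- arXiv:1804.03473 — 4 statements merged into one kernel-verified Lean document; each statement's English description precedes it below -/
import Mathlib

section
/- Let n ≥ 1 be a natural number and let φ be a permutation of Fin n × Fin 2. Then orb(φ) + orb(φ ∘ σ) ≤ n + 2·c, where c is the number of orbits of the action on Fin n × Fin 2 of the subgroup of the permutation group generated by φ and σ. -/
/-- The number of orbits (cycles, including fixed points) of a permutation `f`
of a finite type `α`: the number of equivalence classes of the relation
`∃ k : ℤ, (f ^ k) x = y`. -/
noncomputable def orb {α : Type*} [Fintype α] (f : Equiv.Perm α) : ℕ :=
  Nat.card (Quotient (Equiv.Perm.SameCycle.setoid f))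

/-- The permutation `σ` of `Fin n × Fin 2` given by `σ (i, j) = (i, j + 1)`. -/
def sigmaPerm (n : ℕ) : Equiv.Perm (Fin n × Fin 2) :=
  Equiv.prodCongr (Equiv.refl (Fin n)) (Equiv.addRight (1 : Fin 2))

/-! The theorem is the genus bound `orb x + orb y + orb (x * y) ≤ |α| + 2 c` for the hypermap
`(x, y)`, applied to `x = φ`, `y = σ`, where `orb σ = n` and `|α| = 2 n`.
It is proved by induction on the support of `y`. Write `y = τ * y'` with `τ = swap a (y a)`; then
`y'` fixes `a` and has one cycle more than `y`. Put `x' = x * τ`, so that `x' * y' = x * y`. Then `τ`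
either splits the cycle of `x` through `a` and `y a`, or merges the two cycles through them, and
in the second case `a` and `y a` stay in one orbit of `⟨x', y'⟩`. Either way
`orb x + orb y - 2 c` does not decrease, and for `y = 1` the bound is an equality. -/

open Equiv Equiv.Perm MulAction Subgroup

namespace Setoid

variable {γ β : Type*} [Finite γ] {s t : Setoid γ}

theorem card_quotient_le_of_le (h : s ≤ t) : Nat.card (Quotient t) ≤ Nat.card (Quotient s) :=
  Nat.card_le_card_of_surjective _ (Quotient.map_surjective (f := id) (fun _ _ hpq => h hpq)
    Function.surjective_id)

theorem card_quotient_lt_of_le {a b : γ} (h : s ≤ t) (ht : t a b) (hs : ¬ s a b) :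
    Nat.card (Quotient t) < Nat.card (Quotient s) := by
  classical
  have := Fintype.ofFinite γ
  simp only [Nat.card_eq_fintype_card]
  exact Fintype.card_lt_of_surjective_not_injective _
    (Quotient.map_surjective (f := id) (fun _ _ hpq => h hpq) Function.surjective_id)
    fun hinj => hs (Quotient.exact (hinj (Quotient.sound ht)))

theorem card_range_le_of_le_ker {F : γ → β} (h : s ≤ ker F) :
    Nat.card (Set.range F) ≤ Nat.card (Quotient s) :=
  Nat.card_congr (quotientKerEquivRange F) ▸ card_quotient_le_of_le h

end Setoid

section OrbitRel

variable {G α β : Type*} [Group G] [MulAction G α]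

theorem MulAction.orbitRel_mono {H K : Subgroup G} (h : H ≤ K) : orbitRel H α ≤ orbitRel K α := by
  rintro p q ⟨g, rfl⟩
  exact ⟨⟨g, h g.2⟩, rfl⟩

theorem MulAction.card_orbitRel_quotient_anti [Finite α] {H K : Subgroup G} (h : H ≤ K) :
    Nat.card (orbitRel.Quotient K α) ≤ Nat.card (orbitRel.Quotient H α) :=
  Setoid.card_quotient_le_of_le (orbitRel_mono h)

theorem MulAction.orbitRel_closure_le_ker {T : Set G} {F : α → β}
    (hF : ∀ g ∈ T, ∀ p, F (g • p) = F p) : orbitRel (closure T) α ≤ Setoid.ker F := by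
  have hinv : ∀ g ∈ closure T, ∀ p, F (g • p) = F p := by
    intro g hg
    induction hg using closure_induction with
    | mem g hg => exact hF g hg
    | one => simp
    | mul g h _ _ ihg ihh => intro p; rw [mul_smul, ihg, ihh]
    | inv g _ ih => intro p; rw [← ih (g⁻¹ • p), smul_inv_smul]
  rintro p q ⟨g, rfl⟩
  exact hinv g g.2 q

end OrbitRel

section Transposition

variable {α : Type*} [DecidableEq α]

theorem orbitRel_closure_insert_swap {T : Set (Perm α)} {a b : α}
    (hab : orbitRel (closure T) α a b) :
    orbitRel (closure (insert (swap a b) T)) α = orbitRel (closure T) α := by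
  refine le_antisymm ?_ (orbitRel_mono (closure_mono (Set.subset_insert _ _)))
  have := orbitRel_closure_le_ker (T := insert (swap a b) T)
    (F := (Quotient.mk'' : α → orbitRel.Quotient (closure T) α)) ?_
  · rwa [Setoid.ker_mk_eq] at this
  rintro g (rfl | hg) p
  · rw [Perm.smul_def, swap_apply_def]
    split_ifs with hpa hpb
    · exact Quotient.sound (hpa ▸ (orbitRel (closure T) α).symm hab)
    · exact Quotient.sound (hpb ▸ hab)
    · rfl
  · exact Quotient.sound ⟨⟨g, subset_closure hg⟩, rfl⟩

theorem card_orbitRel_quotient_le_insert_swap [Finite α] (T : Set (Perm α)) (a b : α) :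
    Nat.card (orbitRel.Quotient (closure T) α) ≤
      Nat.card (orbitRel.Quotient (closure (insert (swap a b) T)) α) + 1 := by
  classical
  let π : α → orbitRel.Quotient (closure T) α := Quotient.mk''
  -- `F` is invariant under `swap a b`, and its range misses at most the orbit of `b`
  let F : α → orbitRel.Quotient (closure T) α := fun p => if π p = π b then π a else π p
  have hF : Nat.card (Set.range F) ≤
      Nat.card (orbitRel.Quotient (closure (insert (swap a b) T)) α) := by
    refine Setoid.card_range_le_of_le_ker (orbitRel_closure_le_ker ?_)
    rintro g (rfl | hg) p
    · rw [Perm.smul_def, swap_apply_def]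
      split_ifs with hpa hpb <;> simp_all [F]
    · have : π (g p) = π p := Quotient.sound ⟨⟨g, subset_closure hg⟩, rfl⟩
      simp only [Perm.smul_def, F, this]
  have hcover : Set.univ ⊆ insert (π b) (Set.range F) := by
    rintro c -
    induction c using Quotient.inductionOn' with | h p => ?_
    by_cases hp : π p = π b
    · exact Or.inl hp
    · exact Or.inr ⟨p, if_neg hp⟩
  calc Nat.card (orbitRel.Quotient (closure T) α)
      = (Set.univ : Set (orbitRel.Quotient (closure T) α)).ncard := (Set.ncard_univ _).symm
    _ ≤ (insert (π b) (Set.range F)).ncard := Set.ncard_le_ncard hcover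
    _ ≤ Nat.card (Set.range F) + 1 := Set.ncard_insert_le _ _
    _ ≤ _ := by omega

theorem sameCycle_mul_swap_of_not_sameCycle [Finite α] {x : Perm α} {a b : α}
    (h : ¬ x.SameCycle a b) : (x * swap a b).SameCycle a b := by
  by_contra hg
  -- from `a`, the permutation `x * swap a b` runs along the `x`-cycle of `b` until it meets `b`
  have hpath : ∀ j : ℕ, (x * swap a b).SameCycle a ((x ^ (j + 1)) b) := by
    intro j
    induction j with
    | zero => exact ⟨1, by simp⟩
    | succ j ih =>
      have hna : (x ^ (j + 1)) b ≠ a := fun e => h (e ▸ sameCycle_pow_right.2 SameCycle.rfl).symm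
      have hnb : (x ^ (j + 1)) b ≠ b := fun e => hg (by rwa [e] at ih)
      have hstep : (x * swap a b) ((x ^ (j + 1)) b) = (x ^ (j + 1 + 1)) b := by
        rw [mul_apply, swap_apply_of_ne_of_ne hna hnb, pow_succ' x (j + 1), mul_apply]
      exact hstep ▸ sameCycle_apply_right.2 ih
  apply hg
  simpa [Nat.sub_add_cancel (orderOf_pos x), pow_orderOf_eq_one] using hpath (orderOf x - 1)

theorem not_sameCycle_mul_swap [Finite α] {x : Perm α} {a b : α} (hab : a ≠ b)
    (h : x.SameCycle a b) : ¬ (x * swap a b).SameCycle a b := by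
  have hex : ∃ m, 0 < m ∧ (x ^ m) b = a := by
    obtain ⟨m, hm, -, h⟩ := h.symm.exists_pow_eq''
    exact ⟨m, hm, h⟩
  obtain ⟨hm, hma⟩ := Nat.find_spec hex
  set m := Nat.find hex
  have hne_a : ∀ i, 0 < i → i < m → (x ^ i) b ≠ a := fun i hi him e =>
    Nat.find_min hex him ⟨hi, e⟩
  have hne_b : ∀ i, 0 < i → i ≤ m → (x ^ i) b ≠ b := by
    intro i hi him e
    rcases him.lt_or_eq with him | rfl
    · refine hne_a (m - i) (by omega) (by omega) ?_
      nth_rewrite 1 [← e]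
      rw [← mul_apply, ← pow_add, Nat.sub_add_cancel him.le, hma]
    · exact hab (hma.symm.trans e)
  -- the `x * swap a b`-orbit of `a` is `{(x ^ i) b | 0 < i ≤ m}`
  have horbit : ∀ k : ℕ, ∃ i, 0 < i ∧ i ≤ m ∧ (x ^ i) b = ((x * swap a b) ^ k) a := by
    intro k
    induction k with
    | zero => exact ⟨m, hm, le_rfl, hma⟩
    | succ k ih =>
      obtain ⟨i, hi, him, hik⟩ := ih
      rw [pow_succ', mul_apply, ← hik]
      rcases him.lt_or_eq with him | rfl
      · refine ⟨i + 1, by omega, him, ?_⟩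
        rw [mul_apply, swap_apply_of_ne_of_ne (hne_a i hi him) (hne_b i hi him.le), pow_succ',
          mul_apply]
      · exact ⟨1, one_pos, hm, by rw [hma, mul_apply, swap_apply_left, pow_one]⟩
  intro hg
  obtain ⟨k, hk⟩ := hg.exists_nat_pow_eq
  obtain ⟨i, hi, him, hik⟩ := horbit k
  exact hne_b i hi him (hik.trans hk)

end Transposition

section Orb

variable {α : Type*}

theorem sameCycle_iff_orbitRel_closure {f : Perm α} {p q : α} :
    f.SameCycle p q ↔ orbitRel (closure {f}) α p q := by
  rw [orbitRel_apply, ← zpowers_eq_closure, sameCycle_comm]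
  constructor
  · rintro ⟨k, hk⟩
    exact ⟨⟨f ^ k, zpow_mem_zpowers f k⟩, hk⟩
  · rintro ⟨⟨g, hg⟩, rfl⟩
    obtain ⟨k, rfl⟩ := mem_zpowers_iff.1 hg
    exact ⟨k, rfl⟩

variable [Fintype α]

theorem orb_eq_card_orbitRel_quotient (f : Perm α) :
    orb f = Nat.card (orbitRel.Quotient (closure {f}) α) := by
  rw [orb, show SameCycle.setoid f = orbitRel (closure {f}) α from
    Setoid.ext fun _ _ => sameCycle_iff_orbitRel_closure]

theorem orb_one : orb (1 : Perm α) = Fintype.card α := by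
  rw [orb, ← Nat.card_eq_fintype_card (α := α)]
  exact Nat.card_congr (Equiv.ofBijective _
    ⟨fun p q h => sameCycle_one.1 (Quotient.exact h), Quotient.mk_surjective⟩).symm

variable [DecidableEq α]

theorem orb_le_orb_add_one_of_mem_closure {f g : Perm α} {a b : α}
    (hg : g ∈ closure (insert (swap a b) {f})) : orb f ≤ orb g + 1 := by
  rw [orb_eq_card_orbitRel_quotient, orb_eq_card_orbitRel_quotient]
  exact (card_orbitRel_quotient_le_insert_swap {f} a b).trans (Nat.add_le_add_right
    (card_orbitRel_quotient_anti ((closure_le _).2 (Set.singleton_subset_iff.2 hg))) 1)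

theorem orb_lt_orb_of_mem_closure {f g : Perm α} {a b : α}
    (hg : g ∈ closure (insert (swap a b) {f})) (hf : f.SameCycle a b)
    (hg' : ¬ g.SameCycle a b) : orb f < orb g := by
  rw [orb_eq_card_orbitRel_quotient, orb_eq_card_orbitRel_quotient]
  refine Setoid.card_quotient_lt_of_le ?_ (sameCycle_iff_orbitRel_closure.1 hf)
    (mt sameCycle_iff_orbitRel_closure.2 hg')
  rw [← orbitRel_closure_insert_swap (sameCycle_iff_orbitRel_closure.1 hf)]
  exact orbitRel_mono ((closure_le _).2 (Set.singleton_subset_iff.2 hg))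

end Orb

section Genus

variable {α : Type*} [Fintype α] [DecidableEq α]

theorem orb_add_orb_add_two_mul_le_mul_swap {x y : Perm α} {a b : α} (hb : y a = b)
    (hab : a ≠ b) :
    orb x + orb y + 2 * Nat.card (orbitRel.Quotient (closure {x * swap a b, swap a b * y}) α) ≤
      orb (x * swap a b) + orb (swap a b * y) +
        2 * Nat.card (orbitRel.Quotient (closure {x, y}) α) := by
  have hτx : x * swap a b ∈ closure (insert (swap a b) {x}) :=
    mul_mem (subset_closure (Set.mem_insert_of_mem _ rfl)) (subset_closure (Set.mem_insert _ _))
  have hτy : swap a b * y ∈ closure (insert (swap a b) {y}) :=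
    mul_mem (subset_closure (Set.mem_insert _ _)) (subset_closure (Set.mem_insert_of_mem _ rfl))
  have hy : orb y < orb (swap a b * y) := by
    refine orb_lt_orb_of_mem_closure hτy ⟨1, by simpa using hb⟩ fun h => hab (h.eq_of_left ?_)
    rw [Function.IsFixedPt, mul_apply, hb, swap_apply_right]
  have hcomp : Nat.card (orbitRel.Quotient
      (closure (insert (swap a b) {x * swap a b, swap a b * y})) α) ≤
      Nat.card (orbitRel.Quotient (closure {x, y}) α) := by
    set S : Set (Perm α) := insert (swap a b) {x * swap a b, swap a b * y}
    have hS : swap a b ∈ S ∧ x * swap a b ∈ S ∧ swap a b * y ∈ S := by simp [S]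
    refine card_orbitRel_quotient_anti ((closure_le _).2 (Set.insert_subset_iff.2
      ⟨?_, Set.singleton_subset_iff.2 ?_⟩))
    · simpa using mul_mem (subset_closure hS.2.1) (subset_closure hS.1)
    · simpa using mul_mem (subset_closure hS.1) (subset_closure hS.2.2)
  have hinsert := card_orbitRel_quotient_le_insert_swap {x * swap a b, swap a b * y} a b
  by_cases hx : x.SameCycle a b
  · have := orb_lt_orb_of_mem_closure hτx hx (not_sameCycle_mul_swap hab hx)
    omega
  · have hx' := orb_le_orb_add_one_of_mem_closure hτx
    have hmerge : orbitRel (closure {x * swap a b, swap a b * y}) α a b :=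
      orbitRel_mono ((closure_le _).2 (Set.singleton_subset_iff.2 (subset_closure (by simp))))
        (sameCycle_iff_orbitRel_closure.1 (sameCycle_mul_swap_of_not_sameCycle hx))
    have hinsert_eq : Nat.card (orbitRel.Quotient
        (closure (insert (swap a b) {x * swap a b, swap a b * y})) α) =
        Nat.card (orbitRel.Quotient (closure {x * swap a b, swap a b * y}) α) :=
      congrArg (fun s => Nat.card (Quotient s)) (orbitRel_closure_insert_swap hmerge)
    omega

theorem orb_add_orb_add_orb_mul_le (x y : Perm α) :
    orb x + orb y + orb (x * y) ≤
      Fintype.card α + 2 * Nat.card (orbitRel.Quotient (closure {x, y}) α) := by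
  induction hN : y.support.card using Nat.strong_induction_on generalizing x y with
  | _ N ih =>
  rcases y.support.eq_empty_or_nonempty with hy | ⟨a, ha⟩
  · rw [support_eq_empty_iff.1 hy, mul_one, orb_one, Set.pair_comm, closure_insert_one,
      ← orb_eq_card_orbitRel_quotient]
    omega
  · have ha : y a ≠ a := mem_support.1 ha
    have h := ih _ (hN ▸ card_support_swap_mul ha) (x * swap a (y a)) (swap a (y a) * y) rfl
    rw [mul_assoc, swap_mul_self_mul] at h
    have := orb_add_orb_add_two_mul_le_mul_swap (x := x) rfl (Ne.symm ha)
    omega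

end Genus

theorem sameCycle_sigmaPerm_iff {n : ℕ} {p q : Fin n × Fin 2} :
    (sigmaPerm n).SameCycle p q ↔ p.1 = q.1 := by
  constructor
  · intro h
    exact orbitRel_closure_le_ker (F := Prod.fst) (by simp [sigmaPerm])
      (sameCycle_iff_orbitRel_closure.1 h)
  · intro h
    by_cases h2 : p.2 = q.2
    · rw [Prod.ext h h2]
    · refine ⟨1, Prod.ext h ?_⟩
      have hfin2 : ∀ u v : Fin 2, u ≠ v → u + 1 = v := by decide
      simpa [sigmaPerm] using hfin2 _ _ h2

theorem orb_sigmaPerm (n : ℕ) : orb (sigmaPerm n) = n := by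
  rw [orb, show SameCycle.setoid (sigmaPerm n) = Setoid.ker Prod.fst from
    Setoid.ext fun _ _ => sameCycle_sigmaPerm_iff,
    Nat.card_congr (Setoid.quotientKerEquivOfSurjective _ Prod.fst_surjective), Nat.card_fin]

theorem orb_add_orb_le_components_general (n : ℕ)
    (φ : Equiv.Perm (Fin n × Fin 2)) :
    orb φ + orb (φ * sigmaPerm n) ≤ n +
      2 * Nat.card (MulAction.orbitRel.Quotient
        (Subgroup.closure ({φ, sigmaPerm n} : Set (Equiv.Perm (Fin n × Fin 2))))
        (Fin n × Fin 2)) := by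
  have h := orb_add_orb_add_orb_mul_le φ (sigmaPerm n)
  rw [orb_sigmaPerm, Fintype.card_prod, Fintype.card_fin, Fintype.card_fin] at h
  omega

theorem orb_add_orb_le_components (n : ℕ) (hn : 1 ≤ n)
    (φ : Equiv.Perm (Fin n × Fin 2)) :
    orb φ + orb (φ * sigmaPerm n) ≤ n +
      2 * Nat.card (MulAction.orbitRel.Quotient
        (Subgroup.closure ({φ, sigmaPerm n} : Set (Equiv.Perm (Fin n × Fin 2))))
        (Fin n × Fin 2)) :=
  orb_add_orb_le_components_general n φ
end

section
/- Let n ≥ 1 be a natural number and let φ be a permutation of Fin n × Fin 2. Then orb(φ) + orb(φ ∘ σ) ≡ n (mod 2). -/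
open Equiv Equiv.Perm

section Aux

variable {α : Type*} [Fintype α] [DecidableEq α]

noncomputable def gAux (f : Equiv.Perm α) (x : α) :
    ({c // c ∈ f.cycleFactorsFinset} ⊕ {x : α // f x = x}) :=
  if h : f x = x then Sum.inr ⟨x, h⟩ else
    Sum.inl ⟨f.cycleOf x, cycleOf_mem_cycleFactorsFinset_iff.mpr (mem_support.mpr h)⟩

noncomputable def orbEquivAux (f : Equiv.Perm α) :
    Quotient (Equiv.Perm.SameCycle.setoid f) →
      ({c // c ∈ f.cycleFactorsFinset} ⊕ {x : α // f x = x}) :=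
  Quotient.lift (gAux f)
    (by
      intro x y (hxy : f.SameCycle x y)
      by_cases hx : f x = x
      · obtain ⟨k, hk⟩ := hxy
        have hyx : y = x := by rw [← hk, zpow_apply_eq_self_of_apply_eq_self hx]
        subst hyx; rfl
      · have hy : ¬ f y = y := by
          intro hy
          obtain ⟨k, hk⟩ := hxy.symm
          have hxy' : x = y := by rw [← hk, zpow_apply_eq_self_of_apply_eq_self hy]
          exact hx (hxy' ▸ hy)
        unfold gAux
        rw [dif_neg hx, dif_neg hy]
        congr 1
        exact Subtype.ext hxy.cycleOf_eq)

lemma orbEquivAux_bij (f : Equiv.Perm α) : Function.Bijective (orbEquivAux f) := by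
  constructor
  · rintro ⟨x⟩ ⟨y⟩ h
    refine Quotient.sound ?_
    show f.SameCycle x y
    have h : gAux f x = gAux f y := h
    unfold gAux at h
    by_cases hx : f x = x <;> by_cases hy : f y = y
    · rw [dif_pos hx, dif_pos hy] at h
      cases Sum.inr.inj h
      exact Equiv.Perm.SameCycle.refl _ _
    · rw [dif_pos hx, dif_neg hy] at h
      exact absurd h (by simp)
    · rw [dif_neg hx, dif_pos hy] at h
      exact absurd h (by simp)
    · rw [dif_neg hx, dif_neg hy] at h
      have hcyc : f.cycleOf x = f.cycleOf y := congrArg Subtype.val (Sum.inl.inj h)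
      have hy' : y ∈ (f.cycleOf y).support :=
        mem_support_cycleOf_iff.mpr ⟨Equiv.Perm.SameCycle.refl _ _, mem_support.mpr hy⟩
      rw [← hcyc] at hy'
      exact (mem_support_cycleOf_iff.mp hy').1
  · rintro (⟨c, hc⟩ | ⟨x, hx⟩)
    · have hcycle : c.IsCycle := (mem_cycleFactorsFinset_iff.mp hc).1
      obtain ⟨a, ha⟩ := hcycle.nonempty_support
      refine ⟨Quotient.mk _ a, ?_⟩
      have haf : ¬ f a = a := by
        have := (mem_cycleFactorsFinset_iff.mp hc).2 a ha
        rw [← this]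
        exact mem_support.mp ha
      show gAux f a = _
      unfold gAux
      rw [dif_neg haf]
      congr 1
      exact Subtype.ext (cycle_is_cycleOf ha hc).symm
    · exact ⟨Quotient.mk _ x, by show gAux f x = _; unfold gAux; rw [dif_pos hx]⟩

lemma orb_eq_aux (f : Equiv.Perm α) :
    orb f = f.cycleFactorsFinset.card + (Fintype.card α - f.support.card) := by
  have e : Quotient (Equiv.Perm.SameCycle.setoid f) ≃
      ({c // c ∈ f.cycleFactorsFinset} ⊕ {x : α // f x = x}) :=
    Equiv.ofBijective _ (orbEquivAux_bij f)
  have h1 : Fintype.card {x : α // f x = x} = Fintype.card α - f.support.card := by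
    have : Fintype.card {x : α // f x = x} = (f.supportᶜ).card := by
      rw [Fintype.card_subtype]
      congr 1
      ext x
      simp [Equiv.Perm.notMem_support]
    rw [this, Finset.card_compl]
  rw [orb, Nat.card_congr e, Nat.card_sum, Nat.card_eq_fintype_card,
    Nat.card_eq_fintype_card, Fintype.card_coe, h1]

lemma neg_one_pow_orb (f : Equiv.Perm α) :
    (-1 : ℤˣ) ^ (orb f) = Equiv.Perm.sign f * (-1) ^ (Fintype.card α) := by
  have hs : f.support.card ≤ Fintype.card α := (f.support.card_le_univ)
  have hc : f.cycleFactorsFinset.card = Multiset.card f.cycleType := by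
    simp [Equiv.Perm.cycleType]
  have hsum : f.cycleType.sum = f.support.card := Equiv.Perm.sum_cycleType f
  have key : orb f + f.support.card
      = Multiset.card f.cycleType + Fintype.card α := by
    rw [orb_eq_aux, hc, add_assoc, Nat.sub_add_cancel hs]
  have : ((-1 : ℤˣ) ^ (orb f)) * ((-1) ^ f.support.card) =
      ((-1) ^ (Multiset.card f.cycleType)) * ((-1) ^ (Fintype.card α)) := by
    rw [← pow_add, ← pow_add, key]
  have hsign : Equiv.Perm.sign f = (-1 : ℤˣ) ^ (f.support.card + Multiset.card f.cycleType) := by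
    rw [Equiv.Perm.sign_of_cycleType, hsum]
  have hss : ((-1 : ℤˣ) ^ f.support.card) * ((-1) ^ f.support.card) = 1 := by
    rw [← pow_add, ← two_mul, pow_mul]; simp
  calc (-1 : ℤˣ) ^ (orb f)
      = ((-1 : ℤˣ) ^ (orb f)) * ((-1) ^ f.support.card) * ((-1) ^ f.support.card) := by
        rw [mul_assoc, hss, mul_one]
    _ = ((-1) ^ (Multiset.card f.cycleType)) * ((-1) ^ (Fintype.card α))
          * ((-1) ^ f.support.card) := by rw [this]
    _ = Equiv.Perm.sign f * (-1) ^ (Fintype.card α) := by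
        rw [hsign, pow_add]
        simp [mul_comm, mul_left_comm, mul_assoc]

end Aux

lemma sign_sigmaPerm (n : ℕ) :
    Equiv.Perm.sign (sigmaPerm n) = (-1 : ℤˣ) ^ n := by
  have : sigmaPerm n = Equiv.prodCongrRight (fun _ : Fin n => Equiv.addRight (1 : Fin 2)) := by
    ext x <;> rfl
  rw [this, Equiv.Perm.sign_prodCongrRight]
  have h2 : Equiv.Perm.sign (Equiv.addRight (1 : Fin 2) : Equiv.Perm (Fin 2)) = -1 := by
    decide
  simp [h2]

theorem orb_add_orb_parity (n : ℕ) (hn : 1 ≤ n)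
    (φ : Equiv.Perm (Fin n × Fin 2)) :
    orb φ + orb (φ * sigmaPerm n) ≡ n [MOD 2] := by
  classical
  have hcard : Fintype.card (Fin n × Fin 2) = 2 * n := by simp [Fintype.card_prod, mul_comm]
  have h1 := neg_one_pow_orb φ
  have h2 := neg_one_pow_orb (φ * sigmaPerm n)
  have key : (-1 : ℤˣ) ^ (orb φ + orb (φ * sigmaPerm n)) = (-1 : ℤˣ) ^ n := by
    rw [pow_add, h1, h2, hcard]
    rw [map_mul, sign_sigmaPerm]
    have : ((-1 : ℤˣ) ^ (2 * n)) = 1 := by rw [pow_mul]; simp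
    rw [this]
    have hsq : Equiv.Perm.sign φ * Equiv.Perm.sign φ = 1 := by
      rcases Int.units_eq_one_or (Equiv.Perm.sign φ) with h | h <;> rw [h] <;> decide
    rw [mul_one, mul_one, ← mul_assoc, hsq, one_mul]
  -- deduce parity from equality of powers of -1
  have : ∀ a b : ℕ, (-1 : ℤˣ) ^ a = (-1 : ℤˣ) ^ b → a ≡ b [MOD 2] := by
    intro a b hab
    rcases Nat.even_or_odd a with ha | ha <;> rcases Nat.even_or_odd b with hb | hb
    · simpa [Nat.ModEq, Nat.even_iff.mp ha, Nat.even_iff.mp hb]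
    · exfalso; rw [ha.neg_one_pow, hb.neg_one_pow] at hab; exact (by decide : ¬ (1 : ℤˣ) = -1) hab
    · exfalso; rw [ha.neg_one_pow, hb.neg_one_pow] at hab; exact (by decide : ¬ (-1 : ℤˣ) = 1) hab
    · simpa [Nat.ModEq, Nat.odd_iff.mp ha, Nat.odd_iff.mp hb]
  exact this _ _ key
end

section
/- For every natural number n ≥ 1 there exists a permutation φ of Fin n × Fin 2 such that the subgroup of the permutation group generated by φ and σ acts transitively on Fin n × Fin 2 and orb(φ) + orb(φ ∘ σ) = n + 2. -/
open Equiv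

section Orbits

variable {α : Type*}

lemma orb_eq_card_of_sameCycle_iff [Fintype α] {β : Type*} [Fintype β] {f : Perm α}
    (key : α → β) (hkey : Function.Surjective key)
    (h : ∀ x y, f.SameCycle x y ↔ key x = key y) : orb f = Fintype.card β := by
  have hker : Perm.SameCycle.setoid f = Setoid.ker key := Setoid.ext h
  rw [orb, hker, Nat.card_congr (Setoid.quotientKerEquivOfSurjective key hkey),
    Nat.card_eq_fintype_card]

lemma orb_eq_one_of_forall_sameCycle [Fintype α] [Nonempty α] {f : Perm α}
    (h : ∀ x y, f.SameCycle x y) : orb f = 1 :=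
  orb_eq_card_of_sameCycle_iff (fun _ ↦ ()) (fun _ ↦ ⟨Classical.arbitrary α, rfl⟩)
    (fun x y ↦ iff_of_true (h x y) rfl)

lemma isPretransitive_of_forall_sameCycle {H : Subgroup (Perm α)} {f : Perm α} (hf : f ∈ H)
    (h : ∀ x y, f.SameCycle x y) : MulAction.IsPretransitive H α where
  exists_smul_eq x y :=
    let ⟨k, hk⟩ := h x y
    ⟨⟨f ^ k, zpow_mem hf k⟩, hk⟩

end Orbits

open Fin.NatCast

section Shear

variable {n : ℕ} [NeZero n]

lemma pow_apply_eq_add_of_apply_eq_add_one {β : Type*} {g : Perm (Fin n × β)} {b : β}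
    (hg : ∀ i, g (i, b) = (i + 1, b)) (i : Fin n) (k : ℕ) :
    (g ^ k) (i, b) = (i + k, b) := by
  induction k generalizing i with
  | zero => simp
  | succ k ih =>
    rw [pow_succ, Perm.mul_apply, hg, ih]
    congr 1
    push_cast
    abel

lemma sameCycle_of_apply_eq_add_one {β : Type*} {g : Perm (Fin n × β)} {b : β}
    (hg : ∀ i, g (i, b) = (i + 1, b)) (i i' : Fin n) : g.SameCycle (i, b) (i', b) :=
  ⟨(i' - i).val, by
    rw [zpow_natCast, pow_apply_eq_add_of_apply_eq_add_one hg, Fin.cast_val_eq_self,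
      add_sub_cancel]⟩

variable (n)

def shearPerm : Perm (Fin n × Fin 2) where
  toFun p := (p.1 + (p.2.val : Fin n), p.2)
  invFun p := (p.1 - (p.2.val : Fin n), p.2)
  left_inv p := by simp
  right_inv p := by simp

variable {n}

@[simp]
lemma shearPerm_apply_zero (i : Fin n) : shearPerm n (i, 0) = (i, 0) := by
  simp [shearPerm]

@[simp]
lemma shearPerm_apply_one (i : Fin n) : shearPerm n (i, 1) = (i + 1, 1) := by
  simp [shearPerm]

@[simp]
lemma shearPerm_mul_sigmaPerm_apply_zero (i : Fin n) :
    (shearPerm n * sigmaPerm n) (i, 0) = (i + 1, 1) := by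
  simp [sigmaPerm]

@[simp]
lemma shearPerm_mul_sigmaPerm_apply_one (i : Fin n) :
    (shearPerm n * sigmaPerm n) (i, 1) = (i, 0) := by
  simp [sigmaPerm]

-- `some i` labels the fixed point `(i, 0)`, `none` the `n`-cycle through the points `(i, 1)`.
lemma shearPerm_sameCycle_iff (x y : Fin n × Fin 2) :
    (shearPerm n).SameCycle x y ↔
      (if x.2 = 0 then some x.1 else none) = (if y.2 = 0 then some y.1 else none) := by
  obtain ⟨i, j⟩ := x
  obtain ⟨i', j'⟩ := y
  have hrot := sameCycle_of_apply_eq_add_one (g := shearPerm n) shearPerm_apply_one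
  have hfix (i : Fin n) : Function.IsFixedPt (shearPerm n) (i, 0) := shearPerm_apply_zero i
  fin_cases j <;> fin_cases j' <;> simp only [Fin.zero_eta, Fin.mk_one, ↓reduceIte,
    one_ne_zero, Option.some.injEq, reduceCtorEq, iff_false, iff_true]
  · exact ⟨fun h ↦ (Prod.ext_iff.1 (h.eq_of_left (hfix i))).1, by rintro rfl; rfl⟩
  · exact fun h ↦ by simpa using h.eq_of_left (hfix i)
  · exact fun h ↦ by simpa using h.symm.eq_of_left (hfix i')
  · exact hrot i i'

lemma orb_shearPerm : orb (shearPerm n) = n + 1 := by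
  rw [orb_eq_card_of_sameCycle_iff _ ?_ shearPerm_sameCycle_iff, Fintype.card_option,
    Fintype.card_fin]
  rintro (_ | i)
  · exact ⟨(0, 1), rfl⟩
  · exact ⟨(i, 0), rfl⟩

lemma shearPerm_mul_sigmaPerm_sameCycle (x y : Fin n × Fin 2) :
    (shearPerm n * sigmaPerm n).SameCycle x y := by
  set ψ := shearPerm n * sigmaPerm n
  have hsq (i : Fin n) : (ψ ^ 2) (i, 1) = (i + 1, 1) := by
    rw [sq, Perm.mul_apply, shearPerm_mul_sigmaPerm_apply_one, shearPerm_mul_sigmaPerm_apply_zero]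
  have hrot (i i' : Fin n) : ψ.SameCycle (i, 1) (i', 1) :=
    (sameCycle_of_apply_eq_add_one hsq i i').of_pow
  have hsheet (z : Fin n × Fin 2) : ψ.SameCycle (z.1, 1) z := by
    obtain ⟨i, j⟩ := z
    fin_cases j
    · show ψ.SameCycle (i, 1) (i, 0)
      rw [← shearPerm_mul_sigmaPerm_apply_one i]
      exact Perm.sameCycle_apply_right.2 (Perm.SameCycle.refl ψ (i, 1))
    · rfl
  exact ((hsheet x).symm.trans (hrot x.1 y.1)).trans (hsheet y)

end Shear

theorem exists_perm_orb_add_orb_eq (n : ℕ) (hn : 1 ≤ n) :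
    ∃ φ : Equiv.Perm (Fin n × Fin 2),
      MulAction.IsPretransitive
        (Subgroup.closure ({φ, sigmaPerm n} : Set (Equiv.Perm (Fin n × Fin 2))))
        (Fin n × Fin 2) ∧
      orb φ + orb (φ * sigmaPerm n) = n + 2 := by
  have : NeZero n := ⟨by omega⟩
  have hψ := shearPerm_mul_sigmaPerm_sameCycle (n := n)
  have hmem : shearPerm n * sigmaPerm n ∈ Subgroup.closure {shearPerm n, sigmaPerm n} :=
    mul_mem (Subgroup.subset_closure (by simp)) (Subgroup.subset_closure (by simp))
  exact ⟨shearPerm n, isPretransitive_of_forall_sameCycle hmem hψ,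
    by rw [orb_shearPerm, orb_eq_one_of_forall_sameCycle hψ]⟩
end

section
/- Let n ≥ 1 and let φ be a permutation of Fin n × Fin 2. With the notation of the context, let D denote the quotient topological space of Fin n × [0,1]² by the equivalence relation generated by (sq(e), p_e(u)) ∼ (sq(Φ(e)), p_{Φ(e)}(u)) for all e ∈ E and u ∈ [0,1]. Then the map D → C³ induced by (i, x) ↦ (i, (x, 0)) is well defined, injective, continuous, and a closed topological embedding whose image is C². -/
open unitInterval

/-- The edge set `E`: black edges on the left, white edges on the right. -/
abbrev Edge (n : ℕ) : Type := (Fin n × Fin 2) ⊕ (Fin n × Fin 2)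

/-- The gluing permutation `Φ = Equiv.sumCongr φ (φ ∘ σ)` of the edge set. -/
def Phi (n : ℕ) (φ : Equiv.Perm (Fin n × Fin 2)) : Equiv.Perm (Edge n) :=
  Equiv.sumCongr φ (φ * sigmaPerm n)

/-- The square containing an edge: its first coordinate. -/
def edgeSq {n : ℕ} : Edge n → Fin n := Sum.elim Prod.fst Prod.fst

/-- The parametrization `p_e : [0,1] → [0,1]²` of the side of the unit square
corresponding to the edge `e`, oriented from negative to positive vertex. -/
def pe {n : ℕ} : Edge n → I → I × I
  | Sum.inl (_, j) =>
      if j = 0 then fun u => (u, 0) else fun u => (σ u, 1)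
  | Sum.inr (_, j) =>
      if j = 0 then fun u => (0, u) else fun u => (1, σ u)

/-- `0` as an element of `[-1, 1]`. -/
def zeroJ : Set.Icc (-1 : ℝ) 1 := ⟨0, by norm_num⟩

/-- Negation on `[-1, 1]`. -/
def negJ (t : Set.Icc (-1 : ℝ) 1) : Set.Icc (-1 : ℝ) 1 :=
  ⟨-t.1, ⟨by linarith [t.2.2], by linarith [t.2.1]⟩⟩

/-- `(1 - s) * t` for `s ∈ [0,1]` and `t ∈ [-1,1]`. -/
def scaleJ (s : I) (t : Set.Icc (-1 : ℝ) 1) : Set.Icc (-1 : ℝ) 1 :=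
  ⟨(1 - s.1) * t.1, by
    constructor <;> nlinarith [s.2.1, s.2.2, t.2.1, t.2.2]⟩

/-- The gluing relation on `Fin n × ([0,1]² × [-1,1])` defining the SBW cubed-complex:
`(edgeSq e, (p_e u, t)) ∼ (edgeSq (Φ e), (p_{Φ e} u, -t))` for `t ≤ 0`. -/
def Rel3 (n : ℕ) (φ : Equiv.Perm (Fin n × Fin 2)) :
    (Fin n × ((I × I) × Set.Icc (-1 : ℝ) 1)) →
      (Fin n × ((I × I) × Set.Icc (-1 : ℝ) 1)) → Prop :=
  fun a b => ∃ (e : Edge n) (u : I) (t : Set.Icc (-1 : ℝ) 1),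
    (t : ℝ) ≤ 0 ∧ a = (edgeSq e, (pe e u, t)) ∧
      b = (edgeSq (Phi n φ e), (pe (Phi n φ e) u, negJ t))

/-- `𝒞³(S,φ)`: the SBW cubed-complex as a quotient topological space. -/
abbrev SBWCubeCx (n : ℕ) (φ : Equiv.Perm (Fin n × Fin 2)) : Type :=
  Quot (Rel3 n φ)

/-- `𝒞²(S,φ)` as the subset of `𝒞³(S,φ)` given by the slice `t = 0`. -/
def SBWSquareCx (n : ℕ) (φ : Equiv.Perm (Fin n × Fin 2)) : Set (SBWCubeCx n φ) :=
  Set.range (fun p : Fin n × (I × I) => Quot.mk (Rel3 n φ) (p.1, (p.2, zeroJ)))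

/-- The gluing relation on `Fin n × [0,1]²` defining the SBW squared-complex
(the Dehn complex in the alternating-link case):
`(sq e, p_e u) ∼ (sq (Φ e), p_{Φ e} u)`. -/
def Rel2 (n : ℕ) (φ : Equiv.Perm (Fin n × Fin 2)) :
    (Fin n × (I × I)) → (Fin n × (I × I)) → Prop :=
  fun a b => ∃ (e : Edge n) (u : I),
    a = (edgeSq e, pe e u) ∧ b = (edgeSq (Phi n φ e), pe (Phi n φ e) u)

/-- `D`: the intrinsic model of the SBW squared-complex `𝒞²(S,φ)`. -/
abbrev SBWSquareCxIntrinsic (n : ℕ) (φ : Equiv.Perm (Fin n × Fin 2)) : Type :=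
  Quot (Rel2 n φ)

lemma negJ_zeroJ : negJ zeroJ = zeroJ := by
  simp [negJ, zeroJ]

lemma negJ_eq_zeroJ {t : Set.Icc (-1 : ℝ) 1} : negJ t = zeroJ ↔ t = zeroJ := by
  simp [negJ, zeroJ, Subtype.ext_iff]

lemma rel3_to_rel2 {n : ℕ} {φ : Equiv.Perm (Fin n × Fin 2)}
    {a b : Fin n × ((I × I) × Set.Icc (-1 : ℝ) 1)}
    (h : Relation.EqvGen (Rel3 n φ) a b) :
    (a.2.2 = zeroJ ↔ b.2.2 = zeroJ) ∧
      (a.2.2 = zeroJ → Relation.EqvGen (Rel2 n φ) (a.1, a.2.1) (b.1, b.2.1)) := by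
  induction h with
  | rel a b hab =>
      obtain ⟨e, u, t, ht, ha, hb⟩ := hab
      subst ha; subst hb
      exact ⟨negJ_eq_zeroJ.symm, fun h0 => Relation.EqvGen.rel _ _ ⟨e, u, rfl, rfl⟩⟩
  | refl a => exact ⟨Iff.rfl, fun _ => Relation.EqvGen.refl _⟩
  | symm a b _ ih =>
      exact ⟨ih.1.symm, fun h0 => (ih.2 (ih.1.mpr h0)).symm⟩
  | trans a b c _ _ ih1 ih2 =>
      exact ⟨ih1.1.trans ih2.1, fun h0 =>
        (ih1.2 h0).trans _ _ _ (ih2.2 (ih1.1.mp h0))⟩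

theorem SBW_square_complex_closed_embedding
    (n : ℕ) (hn : 1 ≤ n) (φ : Equiv.Perm (Fin n × Fin 2)) :
    ∃ f : SBWSquareCxIntrinsic n φ → SBWCubeCx n φ,
      (∀ (i : Fin n) (x : I × I),
        f (Quot.mk (Rel2 n φ) (i, x)) = Quot.mk (Rel3 n φ) (i, (x, zeroJ))) ∧
      Function.Injective f ∧
      Continuous f ∧
      Topology.IsClosedEmbedding f ∧
      Set.range f = SBWSquareCx n φ := by
  have hwd : ∀ a b, Rel2 n φ a b →
      Quot.mk (Rel3 n φ) (a.1, (a.2, zeroJ)) = Quot.mk (Rel3 n φ) (b.1, (b.2, zeroJ)) := by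
    rintro a b ⟨e, u, rfl, rfl⟩
    refine Quot.sound ⟨e, u, zeroJ, le_refl 0, rfl, ?_⟩
    rw [negJ_zeroJ]
  set f : SBWSquareCxIntrinsic n φ → SBWCubeCx n φ :=
    Quot.lift (fun p => Quot.mk (Rel3 n φ) (p.1, (p.2, zeroJ))) hwd with hf
  have hinj : Function.Injective f := by
    intro a b
    induction a using Quot.ind with | _ p => ?_
    induction b using Quot.ind with | _ q => ?_
    intro h
    exact Quot.eq.mpr ((rel3_to_rel2 (Quot.eq.mp h)).2 rfl)
  have hcont : Continuous f :=
    continuous_quot_lift _ (continuous_quot_mk.comp (by fun_prop))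
  have hclosed : IsClosedMap f := by
    intro C hC
    rw [← (isQuotientMap_quot_mk (r := Rel3 n φ)).isClosed_preimage]
    have heq : Quot.mk (Rel3 n φ) ⁻¹' (f '' C)
        = (fun p : Fin n × (I × I) => (p.1, (p.2, zeroJ))) ''
            (Quot.mk (Rel2 n φ) ⁻¹' C) := by
      ext p
      constructor
      · rintro ⟨d, hd, hfd⟩
        induction d using Quot.ind with | _ q => ?_
        have key := rel3_to_rel2 (Quot.eq.mp hfd)
        have h0 : p.2.2 = zeroJ := key.1.mp rfl
        refine ⟨(p.1, p.2.1), ?_, ?_⟩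
        · show Quot.mk (Rel2 n φ) (p.1, p.2.1) ∈ C
          rw [← Quot.eq.mpr (key.2 rfl)]
          exact hd
        · exact Prod.ext rfl (Prod.ext rfl h0.symm)
      · rintro ⟨q, hq, rfl⟩
        exact ⟨Quot.mk _ q, hq, rfl⟩
    rw [heq]
    exact (((hC.preimage continuous_quot_mk).isCompact).image (by fun_prop)).isClosed
  refine ⟨f, fun i x => rfl, hinj, hcont,
    Topology.IsClosedEmbedding.of_continuous_injective_isClosedMap hcont hinj hclosed, ?_⟩
  ext y
  constructor
  · rintro ⟨d, rfl⟩
    induction d using Quot.ind with | _ q => exact ⟨q, rfl⟩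
  · rintro ⟨q, rfl⟩
    exact ⟨Quot.mk _ q, rfl⟩
end
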